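/- arXiv:2007.08099 — 4 statements merged into one kernel-verified Lean document; each statement's English description precedes it below -/
import Mathlib

section
/- Let L > h > 0, a > 0, b > 1, c₂ > 0, c₃ > 0, σ₀ ∈ (0,1). Let ρ, μ, σ be functions on R = (0,L)×(0,h) and let s(x,y) = (a·x, S(y)) with S(y) = ∫₀^y ρ, where ρ : [0,h] → (0,∞) is C¹ and independent of x; let Π = s(R), let ψ : Π → ℝ be C³ and σ̂ : Π → (0,∞) be C¹ with ψ̃ = ψ ∘ s, σ = σ̂ ∘ s, u = (1/ρ)·∂ψ̃/∂y. Assume the density formula ρ = c₂·σ₀^{b/(b−1)}·σ^{−1} and the viscosity formula μ = c₃·σ^{19/25} hold on R. Then at every point of R, ∂/∂y(μ ∂u/∂y) = c₂·c₃·σ₀^{b/(b−1)}·ρ·( ∂/∂s[ σ̂^{−6/25} · ∂²ψ/∂s² ] ) ∘ s. -/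
open Set

/-- In Dorodnitzyn's coordinates, with the density formula
`ρ = c₂ σ₀^{b/(b−1)} σ⁻¹` and viscosity formula `μ = c₃ σ^{19/25}`, the viscous term of the
momentum equation becomes
`∂/∂y(μ ∂u/∂y) = c₂ c₃ σ₀^{b/(b−1)} ρ (∂/∂s[σ̂^{−6/25} ∂²ψ/∂s²]) ∘ s` on `R`. -/
theorem viscous_term_in_dorodnitzyn_coordinates
    (L h a b c₂ c₃ σ₀ : ℝ) (hL : L > h) (hh : h > 0) (ha : a > 0) (hb : 1 < b)
    (hc₂ : 0 < c₂) (hc₃ : 0 < c₃) (hσ₀ : σ₀ ∈ Ioo (0 : ℝ) 1)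
    (ρ : ℝ → ℝ) (hρ : ContDiffOn ℝ 1 ρ (Icc 0 h))
    (hρpos : ∀ y ∈ Icc (0 : ℝ) h, 0 < ρ y)
    (S : ℝ → ℝ) (hS : ∀ y, S y = ∫ t in (0 : ℝ)..y, ρ t)
    (ψ σhat : ℝ → ℝ → ℝ)
    (hψ : ContDiffOn ℝ 3 (fun q : ℝ × ℝ => ψ q.1 q.2) (Ioo 0 (a * L) ×ˢ Ioo 0 (S h)))
    (hσhat : ContDiffOn ℝ 1 (fun q : ℝ × ℝ => σhat q.1 q.2) (Ioo 0 (a * L) ×ˢ Ioo 0 (S h)))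
    (hσhatpos : ∀ q ∈ Ioo 0 (a * L) ×ˢ Ioo 0 (S h), 0 < σhat q.1 q.2)
    (ψt σ u μ : ℝ → ℝ → ℝ)
    (hψt : ∀ x y, ψt x y = ψ (a * x) (S y))
    (hσ : ∀ x y, σ x y = σhat (a * x) (S y))
    (hu : ∀ x y, u x y = (1 / ρ y) * deriv (fun t => ψt x t) y)
    (hρform : ∀ x y, (x, y) ∈ Ioo 0 L ×ˢ Ioo 0 h →
      ρ y = c₂ * σ₀ ^ (b / (b - 1)) * (σ x y)⁻¹)
    (hμform : ∀ x y, (x, y) ∈ Ioo 0 L ×ˢ Ioo 0 h →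
      μ x y = c₃ * (σ x y) ^ ((19 : ℝ) / 25)) :
    ∀ x y, (x, y) ∈ Ioo 0 L ×ˢ Ioo 0 h →
      deriv (fun t => μ x t * deriv (fun t' => u x t') t) y
        = c₂ * c₃ * σ₀ ^ (b / (b - 1)) * ρ y *
          deriv (fun t => (σhat (a * x) t) ^ (-(6 : ℝ) / 25)
            * deriv (deriv (ψ (a * x))) t) (S y) := by
  intro x y hxy
  have hx : x ∈ Ioo 0 L := hxy.1
  have hy : y ∈ Ioo 0 h := hxy.2
  have hcont : ContinuousOn ρ (Icc 0 h) := hρ.continuousOn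
  -- derivative of S
  have hSderiv : ∀ t ∈ Ioo (0:ℝ) h, HasDerivAt S (ρ t) t := by
    intro t ht
    have h1 : IntervalIntegrable ρ MeasureTheory.volume 0 t := by
      apply ContinuousOn.intervalIntegrable
      rw [uIcc_of_le ht.1.le]
      exact hcont.mono (Icc_subset_Icc le_rfl ht.2.le)
    have hct : ContinuousAt ρ t :=
      hcont.continuousAt (Icc_mem_nhds (by linarith [ht.1]) (by linarith [ht.2]))
    have hm : StronglyMeasurableAtFilter ρ (nhds t) MeasureTheory.volume :=
      ContinuousOn.stronglyMeasurableAtFilter isOpen_Ioo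
        (hcont.mono Ioo_subset_Icc_self) t ht
    have hD := intervalIntegral.integral_hasDerivAt_right h1 hm hct
    have hSfun : S = fun u => ∫ s in (0:ℝ)..u, ρ s := funext hS
    rw [hSfun]
    exact hD
  -- S maps Ioo 0 h into Ioo 0 (S h)
  have hSt : ∀ t ∈ Ioo (0:ℝ) h, S t ∈ Ioo 0 (S h) := by
    intro t ht
    have hint : ∀ u v : ℝ, 0 ≤ u → v ≤ h → u ≤ v → IntervalIntegrable ρ MeasureTheory.volume u v := by
      intro u v hu hv huv
      apply ContinuousOn.intervalIntegrable
      rw [uIcc_of_le huv]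
      exact hcont.mono (Icc_subset_Icc hu hv)
    have h1 : 0 < ∫ s in (0:ℝ)..t, ρ s := by
      apply intervalIntegral.intervalIntegral_pos_of_pos_on (hint 0 t le_rfl ht.2.le ht.1.le)
      · intro s hs; exact hρpos s ⟨hs.1.le, by linarith [hs.2, ht.2]⟩
      · exact ht.1
    have h2 : 0 < ∫ s in t..h, ρ s := by
      apply intervalIntegral.intervalIntegral_pos_of_pos_on (hint t h ht.1.le le_rfl ht.2.le)
      · intro s hs; exact hρpos s ⟨by linarith [hs.1, ht.1], hs.2.le⟩
      · exact ht.2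
    have h3 : S h = S t + ∫ s in t..h, ρ s := by
      rw [hS, hS]
      exact (intervalIntegral.integral_add_adjacent_intervals
        (hint 0 t le_rfl ht.2.le ht.1.le) (hint t h ht.1.le le_rfl ht.2.le)).symm
    constructor
    · rw [hS]; exact h1
    · rw [h3]; linarith
  have hax : a * x ∈ Ioo 0 (a * L) :=
    ⟨mul_pos ha hx.1, by have := hx.2; nlinarith⟩
  set I : Set ℝ := Ioo (0:ℝ) (S h) with hI
  -- slices
  have hslice : ∀ (f : ℝ → ℝ → ℝ) (n : ℕ∞),
      ContDiffOn ℝ n (fun q : ℝ × ℝ => f q.1 q.2) (Ioo 0 (a * L) ×ˢ Ioo 0 (S h)) →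
      ContDiffOn ℝ n (f (a * x)) I := by
    intro f n hf
    have : ContDiffOn ℝ n ((fun q : ℝ × ℝ => f q.1 q.2) ∘ (fun s : ℝ => (a * x, s))) I :=
      hf.comp ((contDiff_const.prodMk contDiff_id).contDiffOn)
        (fun s hs => ⟨hax, hs⟩)
    exact this
  have hgC : ContDiffOn ℝ 3 (ψ (a * x)) I := hslice ψ 3 hψ
  have hg1C : ContDiffOn ℝ 2 (deriv (ψ (a * x))) I :=
    hgC.deriv_of_isOpen isOpen_Ioo (by norm_num)
  have hg2C : ContDiffOn ℝ 1 (deriv (deriv (ψ (a * x)))) I :=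
    hg1C.deriv_of_isOpen isOpen_Ioo (by norm_num)
  have hσaC : ContDiffOn ℝ 1 (σhat (a * x)) I := hslice σhat 1 hσhat
  have hσapos : ∀ s ∈ I, 0 < σhat (a * x) s := fun s hs => hσhatpos (a * x, s) ⟨hax, hs⟩
  -- value of u
  have huval : ∀ t ∈ Ioo (0:ℝ) h, u x t = deriv (ψ (a * x)) (S t) := by
    intro t ht
    have hgd : HasDerivAt (ψ (a * x)) (deriv (ψ (a * x)) (S t)) (S t) :=
      (((hgC.differentiableOn (by norm_num)).differentiableAt
        (isOpen_Ioo.mem_nhds (hSt t ht)))).hasDerivAt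
    have hcomp : HasDerivAt (fun t' => ψ (a * x) (S t'))
        (deriv (ψ (a * x)) (S t) * ρ t) t := hgd.comp t (hSderiv t ht)
    have hde : deriv (fun t' => ψt x t') t = deriv (ψ (a * x)) (S t) * ρ t := by
      have hfe : (fun t' => ψt x t') = fun t' => ψ (a * x) (S t') := funext (hψt x)
      rw [hfe, hcomp.deriv]
    have hρt : ρ t ≠ 0 := (hρpos t ⟨ht.1.le, ht.2.le⟩).ne'
    rw [hu, hde]
    field_simp
  -- derivative of u
  have hud : ∀ t ∈ Ioo (0:ℝ) h,
      HasDerivAt (fun t' => u x t') (deriv (deriv (ψ (a * x))) (S t) * ρ t) t := by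
    intro t ht
    have hg1d : HasDerivAt (deriv (ψ (a * x)))
        (deriv (deriv (ψ (a * x))) (S t)) (S t) :=
      ((hg1C.differentiableOn (by norm_num)).differentiableAt
        (isOpen_Ioo.mem_nhds (hSt t ht))).hasDerivAt
    have hcomp : HasDerivAt (fun t' => deriv (ψ (a * x)) (S t'))
        (deriv (deriv (ψ (a * x))) (S t) * ρ t) t := hg1d.comp t (hSderiv t ht)
    apply hcomp.congr_of_eventuallyEq
    filter_upwards [isOpen_Ioo.mem_nhds ht] with t' ht' using huval t' ht'
  -- eventual equality of the integrand
  have heq : (fun t => μ x t * deriv (fun t' => u x t') t) =ᶠ[nhds y]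
      (fun t => (c₂ * c₃ * σ₀ ^ (b / (b - 1))) *
        ((σhat (a * x) (S t)) ^ (-(6:ℝ)/25) * deriv (deriv (ψ (a * x))) (S t))) := by
    filter_upwards [isOpen_Ioo.mem_nhds hy] with t ht
    have hA : 0 < σhat (a * x) (S t) := hσapos _ (hSt t ht)
    have h1 : μ x t = c₃ * (σhat (a * x) (S t)) ^ ((19:ℝ)/25) := by
      rw [hμform x t ⟨hx, ht⟩, hσ]
    have h2 : deriv (fun t' => u x t') t = deriv (deriv (ψ (a * x))) (S t) * ρ t :=
      (hud t ht).deriv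
    have h3 : ρ t = c₂ * σ₀ ^ (b / (b - 1)) * (σhat (a * x) (S t))⁻¹ := by
      rw [hρform x t ⟨hx, ht⟩, hσ]
    have hpow : (σhat (a * x) (S t)) ^ ((19:ℝ)/25) * (σhat (a * x) (S t))⁻¹
        = (σhat (a * x) (S t)) ^ (-(6:ℝ)/25) := by
      rw [← Real.rpow_neg_one (σhat (a * x) (S t)), ← Real.rpow_add hA]
      norm_num
    rw [h1, h2, h3, ← hpow]
    ring
  -- final derivative computation
  have hFd : DifferentiableAt ℝ
      (fun t => (σhat (a * x) t) ^ (-(6:ℝ)/25) * deriv (deriv (ψ (a * x))) t) (S y) := by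
    apply DifferentiableAt.mul
    · exact DifferentiableAt.rpow_const
        ((hσaC.differentiableOn (by norm_num)).differentiableAt
          (isOpen_Ioo.mem_nhds (hSt y hy)))
        (Or.inl (hσapos _ (hSt y hy)).ne')
    · exact (hg2C.differentiableOn (by norm_num)).differentiableAt
        (isOpen_Ioo.mem_nhds (hSt y hy))
  have hF : HasDerivAt
      (fun t => (σhat (a * x) t) ^ (-(6:ℝ)/25) * deriv (deriv (ψ (a * x))) t)
      (deriv (fun t => (σhat (a * x) t) ^ (-(6:ℝ)/25) * deriv (deriv (ψ (a * x))) t) (S y))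
      (S y) := hFd.hasDerivAt
  have hcomp : HasDerivAt
      (fun t => (σhat (a * x) (S t)) ^ (-(6:ℝ)/25) * deriv (deriv (ψ (a * x))) (S t))
      (deriv (fun t => (σhat (a * x) t) ^ (-(6:ℝ)/25) * deriv (deriv (ψ (a * x))) t) (S y) * ρ y)
      y := hF.comp y (hSderiv y hy)
  have hfinal := (hcomp.const_mul (c₂ * c₃ * σ₀ ^ (b / (b - 1)))).deriv
  rw [heq.deriv_eq, hfinal]
  ring
end

section
/- Let L > h > 0, b > 1, c₁, c₂, c₃ > 0, σ₀ ∈ (0,1), set a = c₁σ₀. Let ρ : [0,h] → (0,∞) be C¹ and independent of x, S(y) = ∫₀^y ρ, s(x,y) = (a·x, S(y)) the Dorodnitzyn diffeomorphism of R = (0,L)×(0,h) onto Π = s(R), let ψ : Π → ℝ be C³ and σ̂ : Π → (0,∞) be C¹; set ψ̃ = ψ ∘ s, σ = σ̂ ∘ s, u = (1/ρ)·∂ψ̃/∂y, v = −(1/ρ)·∂ψ̃/∂x. Assume ρ = c₂·σ₀^{b/(b−1)}·σ^{−1} and μ = c₃·σ^{19/25} on R, and assume the stationary momentum equation with constant pressure,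 ρ(u ∂u/∂x + v ∂u/∂y) = ∂/∂y(μ ∂u/∂y), holds on R. Then ψ satisfies on Π the quasi-linear equation ∂ψ/∂s · ∂²ψ/∂ℓ∂s − ∂ψ/∂ℓ · ∂²ψ/∂s² = c₁^{−1} c₂ c₃ σ₀^{b/(b−1)−1} · ∂/∂s[ σ̂^{19/25 − 1} · ∂²ψ/∂s² ]. -/
open Set

private lemma hasDerivAt_comp2 {F : ℝ × ℝ → ℝ} {p : ℝ × ℝ} (hF : DifferentiableAt ℝ F p)
    {g₁ g₂ : ℝ → ℝ} {w₁ w₂ t₀ : ℝ} (h₁ : HasDerivAt g₁ w₁ t₀) (h₂ : HasDerivAt g₂ w₂ t₀)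
    (hg : (g₁ t₀, g₂ t₀) = p) :
    HasDerivAt (fun t => F (g₁ t, g₂ t)) (fderiv ℝ F p (w₁, w₂)) t₀ := by
  have hgd : HasDerivAt (fun t => (g₁ t, g₂ t)) ((w₁, w₂) : ℝ × ℝ) t₀ := h₁.prodMk h₂
  have hF' : HasFDerivAt F (fderiv ℝ F p) (g₁ t₀, g₂ t₀) := by rw [hg]; exact hF.hasFDerivAt
  exact hF'.comp_hasDerivAt t₀ hgd

private lemma fderiv_snd_smul (F : ℝ × ℝ → ℝ) (p : ℝ × ℝ) (c : ℝ) :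
    fderiv ℝ F p (0, c) = c * fderiv ℝ F p (0, 1) := by
  have : ((0 : ℝ), c) = c • ((0 : ℝ), (1 : ℝ)) := by simp
  rw [this, (fderiv ℝ F p).map_smul, smul_eq_mul]

private lemma fderiv_fst_smul (F : ℝ × ℝ → ℝ) (p : ℝ × ℝ) (c : ℝ) :
    fderiv ℝ F p (c, 0) = c * fderiv ℝ F p (1, 0) := by
  have : (c, (0 : ℝ)) = c • (((1 : ℝ), (0 : ℝ))) := by simp
  rw [this, (fderiv ℝ F p).map_smul, smul_eq_mul]


/-- Dorodnitzyn's transformed boundary-layer equation. If the stationary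
momentum equation with constant pressure holds on `R`, then the stream function `ψ` in the
Dorodnitzyn coordinates satisfies the quasi-linear equation
`∂ψ/∂s ∂²ψ/∂ℓ∂s − ∂ψ/∂ℓ ∂²ψ/∂s² = c₁⁻¹ c₂ c₃ σ₀^{b/(b−1)−1} ∂/∂s[σ̂^{19/25−1} ∂²ψ/∂s²]`
on `Pi = s(R)`. -/
theorem dorodnitzyn_transformed_equation
    (L h b c₁ c₂ c₃ σ₀ a : ℝ) (hL : L > h) (hh : h > 0) (hb : 1 < b)
    (hc₁ : 0 < c₁) (hc₂ : 0 < c₂) (hc₃ : 0 < c₃) (hσ₀ : σ₀ ∈ Ioo (0 : ℝ) 1)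
    (ha : a = c₁ * σ₀)
    (ρ : ℝ → ℝ) (hρ : ContDiffOn ℝ 1 ρ (Icc 0 h))
    (hρpos : ∀ y ∈ Icc (0 : ℝ) h, 0 < ρ y)
    (S : ℝ → ℝ) (hS : ∀ y, S y = ∫ t in (0 : ℝ)..y, ρ t)
    (ψ σhat : ℝ → ℝ → ℝ)
    (hψ : ContDiffOn ℝ 3 (fun q : ℝ × ℝ => ψ q.1 q.2) (Ioo 0 (a * L) ×ˢ Ioo 0 (S h)))
    (hσhat : ContDiffOn ℝ 1 (fun q : ℝ × ℝ => σhat q.1 q.2) (Ioo 0 (a * L) ×ˢ Ioo 0 (S h)))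
    (hσhatpos : ∀ q ∈ Ioo 0 (a * L) ×ˢ Ioo 0 (S h), 0 < σhat q.1 q.2)
    (ψt σ u v μ : ℝ → ℝ → ℝ)
    (hψt : ∀ x y, ψt x y = ψ (a * x) (S y))
    (hσ : ∀ x y, σ x y = σhat (a * x) (S y))
    (hu : ∀ x y, u x y = (1 / ρ y) * deriv (fun t => ψt x t) y)
    (hv : ∀ x y, v x y = -(1 / ρ y) * deriv (fun t => ψt t y) x)
    (hρform : ∀ x y, (x, y) ∈ Ioo 0 L ×ˢ Ioo 0 h →
      ρ y = c₂ * σ₀ ^ (b / (b - 1)) * (σ x y)⁻¹)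
    (hμform : ∀ x y, (x, y) ∈ Ioo 0 L ×ˢ Ioo 0 h →
      μ x y = c₃ * (σ x y) ^ ((19 : ℝ) / 25))
    (hmom : ∀ x y, (x, y) ∈ Ioo 0 L ×ˢ Ioo 0 h →
      ρ y * (u x y * deriv (fun t => u t y) x + v x y * deriv (fun t => u x t) y)
        = deriv (fun t => μ x t * deriv (fun t' => u x t') t) y) :
    ∀ l s, (l, s) ∈ Ioo 0 (a * L) ×ˢ Ioo 0 (S h) →
      deriv (ψ l) s * deriv (fun t => deriv (ψ t) s) l
        - deriv (fun t => ψ t s) l * deriv (deriv (ψ l)) s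
      = c₁⁻¹ * c₂ * c₃ * σ₀ ^ (b / (b - 1) - 1) *
          deriv (fun t => (σhat l t) ^ ((19 : ℝ) / 25 - 1)
            * deriv (deriv (ψ l)) t) s := by
  intro l s hls
  obtain ⟨hl, hs⟩ := hls
  have ha0 : 0 < a := by rw [ha]; exact mul_pos hc₁ hσ₀.1
  -- basic facts about S
  have hρc : ContinuousOn ρ (Icc 0 h) := hρ.continuousOn
  have hρne : ∀ t ∈ Icc (0:ℝ) h, ρ t ≠ 0 := fun t ht => (hρpos t ht).ne'
  have hint : ∀ y₁ y₂, y₁ ∈ Icc (0:ℝ) h → y₂ ∈ Icc (0:ℝ) h →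
      IntervalIntegrable ρ MeasureTheory.volume y₁ y₂ := by
    intro y₁ y₂ h₁ h₂
    apply ContinuousOn.intervalIntegrable
    apply hρc.mono
    rw [← uIcc_of_le hh.le]
    exact uIcc_subset_uIcc (by rw [uIcc_of_le hh.le]; exact h₁)
      (by rw [uIcc_of_le hh.le]; exact h₂)
  have hSfun : S = fun y => ∫ t in (0:ℝ)..y, ρ t := funext hS
  have hS0 : S 0 = 0 := by rw [hS]; simp
  have hSd : ∀ t ∈ Ioo (0:ℝ) h, HasDerivAt S (ρ t) t := by
    intro t ht
    rw [hSfun]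
    refine intervalIntegral.integral_hasDerivAt_right
      (hint 0 t ⟨le_refl 0, hh.le⟩ (Ioo_subset_Icc_self ht)) ?_ ?_
    · exact (hρc.mono Ioo_subset_Icc_self).stronglyMeasurableAtFilter isOpen_Ioo t ht
    · exact hρc.continuousAt (Icc_mem_nhds ht.1 ht.2)
  have hScont : ContinuousOn S (Icc 0 h) := by
    rw [hSfun]
    have := intervalIntegral.continuousOn_primitive_interval
      (f := ρ) (a := (0:ℝ)) (b := h) (μ := MeasureTheory.volume) ?_
    · rwa [uIcc_of_le hh.le] at this
    · rw [uIcc_of_le hh.le]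
      exact hρc.integrableOn_compact isCompact_Icc
  have hSmono : StrictMonoOn S (Icc 0 h) := by
    intro y₁ h₁ y₂ h₂ h12
    have key : S y₁ + ∫ t in y₁..y₂, ρ t = S y₂ := by
      rw [hS, hS]
      exact intervalIntegral.integral_add_adjacent_intervals
        (hint 0 y₁ ⟨le_refl 0, hh.le⟩ h₁) (hint y₁ y₂ h₁ h₂)
    have hpos : 0 < ∫ t in y₁..y₂, ρ t := by
      apply intervalIntegral.intervalIntegral_pos_of_pos_on (hint y₁ y₂ h₁ h₂) _ h12
      intro t ht
      exact hρpos t ⟨le_trans h₁.1 ht.1.le, le_trans ht.2.le h₂.2⟩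
    linarith
  -- find (x, y) with a*x = l, S y = s
  have hSh : s ∈ Ioo (S 0) (S h) := by rw [hS0]; exact hs
  obtain ⟨y, hy, hSy⟩ := intermediate_value_Ioo hh.le hScont hSh
  set x : ℝ := l / a with hxdef
  have hax : a * x = l := by rw [hxdef, mul_comm, div_mul_cancel₀ _ ha0.ne']
  have hx : x ∈ Ioo 0 L := by
    constructor
    · exact div_pos hl.1 ha0
    · rw [div_lt_iff₀ ha0]; linarith [hl.2]
  have hSmem : ∀ t ∈ Ioo (0:ℝ) h, S t ∈ Ioo (0:ℝ) (S h) := by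
    intro t ht
    constructor
    · rw [← hS0]
      exact hSmono (left_mem_Icc.2 hh.le) (Ioo_subset_Icc_self ht) ht.1
    · exact hSmono (Ioo_subset_Icc_self ht) (right_mem_Icc.2 hh.le) ht.2
  -- two-variable machinery
  set P : Set (ℝ × ℝ) := Ioo 0 (a*L) ×ˢ Ioo 0 (S h) with hPdef
  have hPopen : IsOpen P := isOpen_Ioo.prod isOpen_Ioo
  set F : ℝ × ℝ → ℝ := fun q => ψ q.1 q.2 with hFdef
  set G : ℝ × ℝ → ℝ := fun q => fderiv ℝ F q (0, 1) with hGdef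
  have hp : ((l, s) : ℝ × ℝ) ∈ P := ⟨hl, hs⟩
  have hGc : ContDiffOn ℝ 2 G P :=
    (hψ.fderiv_of_isOpen hPopen (by norm_num)).clm_apply contDiffOn_const
  have hFd : ∀ q ∈ P, DifferentiableAt ℝ F q := fun q hq =>
    (hψ.contDiffAt (hPopen.mem_nhds hq)).differentiableAt (by norm_num)
  have hGd : ∀ q ∈ P, DifferentiableAt ℝ G q := fun q hq =>
    (hGc.contDiffAt (hPopen.mem_nhds hq)).differentiableAt (by norm_num)
  have hds : ∀ q ∈ P, HasDerivAt (ψ q.1) (G q) q.2 := by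
    intro q hq
    exact hasDerivAt_comp2 (hFd q hq) (hasDerivAt_const q.2 q.1) (hasDerivAt_id q.2) rfl
  set ψs : ℝ := G (l, s) with hψsdef
  set ψl : ℝ := fderiv ℝ F (l, s) (1, 0) with hψldef
  set ψss : ℝ := fderiv ℝ G (l, s) (0, 1) with hψssdef
  set ψls : ℝ := fderiv ℝ G (l, s) (1, 0) with hψlsdef
  have g1 : deriv (ψ l) s = ψs := (hds (l, s) hp).deriv
  have g2 : deriv (fun t => ψ t s) l = ψl :=
    (hasDerivAt_comp2 (hFd (l,s) hp) (hasDerivAt_id l) (hasDerivAt_const l s) rfl).deriv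
  have g3 : deriv (fun t => deriv (ψ t) s) l = ψls := by
    have hev : (fun t => deriv (ψ t) s) =ᶠ[nhds l] (fun t => G (t, s)) := by
      filter_upwards [isOpen_Ioo.mem_nhds hl] with t ht
      exact (hds (t, s) ⟨ht, hs⟩).deriv
    rw [hev.deriv_eq]
    exact (hasDerivAt_comp2 (hGd (l,s) hp) (hasDerivAt_id l) (hasDerivAt_const l s) rfl).deriv
  have hdd : ∀ t ∈ Ioo (0:ℝ) (S h), deriv (deriv (ψ l)) t = fderiv ℝ G (l, t) (0, 1) := by
    intro t ht
    have hev : deriv (ψ l) =ᶠ[nhds t] (fun t' => G (l, t')) := by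
      filter_upwards [isOpen_Ioo.mem_nhds ht] with t' ht'
      exact (hds (l, t') ⟨hl, ht'⟩).deriv
    rw [hev.deriv_eq]
    exact (hasDerivAt_comp2 (hGd (l,t) ⟨hl, ht⟩) (hasDerivAt_const t l) (hasDerivAt_id t) rfl).deriv
  have g4 : deriv (deriv (ψ l)) s = ψss := hdd s hs
  set K : ℝ → ℝ := fun t => σhat l t ^ ((19:ℝ)/25 - 1) * fderiv ℝ G (l, t) (0, 1) with hKdef
  have g5 : deriv (fun t => σhat l t ^ ((19:ℝ)/25 - 1) * deriv (deriv (ψ l)) t) s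
      = deriv K s := by
    apply Filter.EventuallyEq.deriv_eq
    filter_upwards [isOpen_Ioo.mem_nhds hs] with t ht
    rw [hKdef, hdd t ht]
  -- K is differentiable at s
  have hσd : HasDerivAt (fun t' => σhat l t')
      (fderiv ℝ (fun q : ℝ × ℝ => σhat q.1 q.2) (l, s) (0, 1)) s :=
    hasDerivAt_comp2 ((hσhat.contDiffAt (hPopen.mem_nhds hp)).differentiableAt one_ne_zero)
      (hasDerivAt_const s l) (hasDerivAt_id s) rfl
  have hHc : ContDiffOn ℝ 1 (fun q => fderiv ℝ G q (0, 1)) P :=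
    (hGc.fderiv_of_isOpen hPopen (by norm_num)).clm_apply contDiffOn_const
  have hψssd : HasDerivAt (fun t => fderiv ℝ G (l, t) (0, 1))
      (fderiv ℝ (fun q => fderiv ℝ G q (0, 1)) (l, s) (0, 1)) s :=
    hasDerivAt_comp2 ((hHc.contDiffAt (hPopen.mem_nhds hp)).differentiableAt one_ne_zero)
      (hasDerivAt_const s l) (hasDerivAt_id s) rfl
  have hKd : DifferentiableAt ℝ K s := by
    rw [hKdef]
    exact ((hσd.rpow_const (Or.inl (hσhatpos (l, s) hp).ne')).differentiableAt).mul
      hψssd.differentiableAt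
  set k : ℝ := deriv K s with hkdef
  have hK : HasDerivAt K k s := hKd.hasDerivAt
  set C : ℝ := c₂ * c₃ * σ₀ ^ (b / (b - 1)) with hCdef
  have hy' : y ∈ Icc (0:ℝ) h := Ioo_subset_Icc_self hy
  have hρy : ρ y ≠ 0 := hρne y hy'
  -- u in terms of G
  have uGy : ∀ t ∈ Ioo (0:ℝ) h, u x t = G (l, S t) := by
    intro t ht
    have hq : ((l, S t) : ℝ × ℝ) ∈ P := ⟨hl, hSmem t ht⟩
    have hfun : (fun t' => ψt x t') = fun t' => F (l, S t') := by
      funext t'; rw [hψt, hax]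
    have hd : HasDerivAt (fun t' => F (l, S t')) (fderiv ℝ F (l, S t) (0, ρ t)) t :=
      hasDerivAt_comp2 (hFd _ hq) (hasDerivAt_const t l) (hSd t ht) rfl
    rw [hu, hfun, hd.deriv, fderiv_snd_smul]
    simp only [hGdef]
    rw [one_div, inv_mul_cancel_left₀ (hρne t (Ioo_subset_Icc_self ht))]
  have uGx : ∀ t ∈ Ioo (0:ℝ) L, u t y = G (a * t, s) := by
    intro t ht
    have hat : a * t ∈ Ioo 0 (a * L) :=
      ⟨mul_pos ha0 ht.1, by nlinarith [ht.2]⟩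
    have hq : ((a * t, s) : ℝ × ℝ) ∈ P := ⟨hat, hs⟩
    have hfun : (fun t' => ψt t t') = fun t' => F (a * t, S t') := by
      funext t'; rw [hψt]
    have hd : HasDerivAt (fun t' => F (a * t, S t')) (fderiv ℝ F (a * t, s) (0, ρ y)) y := by
      refine hasDerivAt_comp2 (hFd _ hq) (hasDerivAt_const y (a * t)) (hSd y hy) ?_
      rw [hSy]
    rw [hu, hfun, hd.deriv, fderiv_snd_smul]
    simp only [hGdef]
    rw [one_div, inv_mul_cancel_left₀ hρy]
  have hlin : ∀ z : ℝ, HasDerivAt (fun t : ℝ => a * t) a z := by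
    intro z; simpa using (hasDerivAt_id z).const_mul a
  have hux : deriv (fun t => u t y) x = a * ψls := by
    have hev : (fun t => u t y) =ᶠ[nhds x] (fun t => G (a * t, s)) := by
      filter_upwards [isOpen_Ioo.mem_nhds hx] with t ht
      exact uGx t ht
    rw [hev.deriv_eq]
    have hd : HasDerivAt (fun t => G (a * t, s)) (fderiv ℝ G (l, s) (a, 0)) x := by
      refine hasDerivAt_comp2 (hGd _ hp) (hlin x) (hasDerivAt_const x s) ?_
      rw [hax]
    rw [hd.deriv, fderiv_fst_smul]
  have huy : deriv (fun t => u x t) y = ρ y * ψss := by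
    have hev : (fun t => u x t) =ᶠ[nhds y] (fun t => G (l, S t)) := by
      filter_upwards [isOpen_Ioo.mem_nhds hy] with t ht
      exact uGy t ht
    rw [hev.deriv_eq]
    have hd : HasDerivAt (fun t => G (l, S t)) (fderiv ℝ G (l, s) (0, ρ y)) y := by
      refine hasDerivAt_comp2 (hGd _ hp) (hasDerivAt_const y l) (hSd y hy) ?_
      rw [hSy]
    rw [hd.deriv, fderiv_snd_smul]
  have huv : u x y = ψs := by rw [uGy y hy, hSy, hψsdef]
  have hvv : v x y = -(1 / ρ y) * (a * ψl) := by
    have hfun : (fun t => ψt t y) = fun t => F (a * t, S y) := by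
      funext t; rw [hψt]
    have hd : HasDerivAt (fun t => F (a * t, S y)) (fderiv ℝ F (l, s) (a, 0)) x := by
      refine hasDerivAt_comp2 (hFd _ hp) (hlin x) (hasDerivAt_const x (S y)) ?_
      rw [hax, hSy]
    rw [hv, hfun, hd.deriv, fderiv_fst_smul]
  -- the right-hand side of the momentum equation
  have hRHSfun : ∀ t ∈ Ioo (0:ℝ) h,
      μ x t * deriv (fun t' => u x t') t = C * K (S t) := by
    intro t ht
    have hq : ((l, S t) : ℝ × ℝ) ∈ P := ⟨hl, hSmem t ht⟩
    have hdu : deriv (fun t' => u x t') t = ρ t * fderiv ℝ G (l, S t) (0, 1) := by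
      have hev : (fun t' => u x t') =ᶠ[nhds t] (fun t' => G (l, S t')) := by
        filter_upwards [isOpen_Ioo.mem_nhds ht] with t' ht'
        exact uGy t' ht'
      rw [hev.deriv_eq]
      have hd : HasDerivAt (fun t' => G (l, S t')) (fderiv ℝ G (l, S t) (0, ρ t)) t :=
        hasDerivAt_comp2 (hGd _ hq) (hasDerivAt_const t l) (hSd t ht) rfl
      rw [hd.deriv, fderiv_snd_smul]
    have hxt : ((x, t) : ℝ × ℝ) ∈ Ioo 0 L ×ˢ Ioo 0 h := ⟨hx, ht⟩
    have hσxt : σ x t = σhat l (S t) := by rw [hσ, hax]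
    have hw : 0 < σhat l (S t) := hσhatpos (l, S t) hq
    rw [hdu, hμform x t hxt, hρform x t hxt, hσxt, hCdef]
    simp only [hKdef]
    rw [Real.rpow_sub_one hw.ne']
    field_simp
  have hRHS : deriv (fun t => μ x t * deriv (fun t' => u x t') t) y = C * (k * ρ y) := by
    have hev : (fun t => μ x t * deriv (fun t' => u x t') t) =ᶠ[nhds y]
        (fun t => C * K (S t)) := by
      filter_upwards [isOpen_Ioo.mem_nhds hy] with t ht
      exact hRHSfun t ht
    rw [hev.deriv_eq]
    have hKS : HasDerivAt K k (S y) := by rw [hSy]; exact hK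
    exact ((hKS.comp y (hSd y hy)).const_mul C).deriv
  -- assemble
  have hmomxy := hmom x y ⟨hx, hy⟩
  rw [huv, hux, hvv, huy, hRHS] at hmomxy
  have key : a * (ψs * ψls - ψl * ψss) = C * k := by
    apply mul_left_cancel₀ hρy
    calc ρ y * (a * (ψs * ψls - ψl * ψss))
        = ρ y * (ψs * (a * ψls) + -(1 / ρ y) * (a * ψl) * (ρ y * ψss)) := by
          field_simp; ring
      _ = C * (k * ρ y) := hmomxy
      _ = ρ y * (C * k) := by ring
  rw [g1, g2, g3, g4, g5]
  have hσ₀ne : σ₀ ≠ 0 := hσ₀.1.ne'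
  rw [Real.rpow_sub_one hσ₀ne, ha] at *
  rw [hCdef] at key
  have hc₁ne : c₁ ≠ 0 := hc₁.ne'
  field_simp at key ⊢
  linear_combination key
end

section
/- Let c > 0, let f : (0,∞) → ℝ be C³ and Σ : (0,∞) → (0,∞) be C¹, and define ψ(ℓ, s) = ℓ^{1/2}·f(s/ℓ^{1/2}) and σ̂(ℓ, s) = Σ(s/ℓ^{1/2}). If ψ satisfies ∂ψ/∂s · ∂²ψ/∂ℓ∂s − ∂ψ/∂ℓ · ∂²ψ/∂s² = c · ∂/∂s[ σ̂^{−6/25} · ∂²ψ/∂s² ] at every (ℓ, s) with ℓ > 0, s > 0, then f satisfies the ordinary differential equation −(1/2)·f(z)·f″(z) = c · d/dz[ Σ(z)^{−6/25}·f″(z) ] for every z > 0. -/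
open Set

/-- If the similarity stream function `ψ(ℓ,s) = ℓ^{1/2} f(s/ℓ^{1/2})` with
kinetic-energy factor `σ̂(ℓ,s) = Σ(s/ℓ^{1/2})` satisfies Dorodnitzyn's transformed
boundary-layer equation for all `ℓ, s > 0`, then `f` satisfies the Blasius-type ODE
`−(1/2) f f″ = c d/dz[Σ^{−6/25} f″]` on `(0,∞)`. -/
theorem similarity_reduction_to_ode
    (c : ℝ) (hc : 0 < c)
    (f Sig : ℝ → ℝ) (hf : ContDiffOn ℝ 3 f (Ioi 0))
    (hSig : ContDiffOn ℝ 1 Sig (Ioi 0)) (hSigpos : ∀ z > (0 : ℝ), 0 < Sig z)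
    (ψ σhat : ℝ → ℝ → ℝ)
    (hψ : ∀ l s : ℝ, ψ l s = l ^ ((1 : ℝ) / 2) * f (s / l ^ ((1 : ℝ) / 2)))
    (hσhat : ∀ l s : ℝ, σhat l s = Sig (s / l ^ ((1 : ℝ) / 2)))
    (hpde : ∀ l > (0 : ℝ), ∀ s > (0 : ℝ),
      deriv (ψ l) s * deriv (fun t => deriv (ψ t) s) l
        - deriv (fun t => ψ t s) l * deriv (deriv (ψ l)) s
      = c * deriv (fun t => (σhat l t) ^ (-(6 : ℝ) / 25) * deriv (deriv (ψ l)) t) s) :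
    ∀ z > (0 : ℝ),
      -(1 / 2) * f z * deriv (deriv f) z
        = c * deriv (fun t => (Sig t) ^ (-(6 : ℝ) / 25) * deriv (deriv f) t) z := by
  intro z hz
  -- basic facts about f and its derivatives on Ioi 0
  have hD2 : ContDiffOn ℝ 2 (deriv f) (Ioi 0) := by
    refine hf.deriv_of_isOpen isOpen_Ioi ?_
    norm_num
  have hfd : ∀ x > (0 : ℝ), HasDerivAt f (deriv f x) x := by
    intro x hx
    exact ((hf.differentiableOn (by norm_num)).differentiableAt
      (isOpen_Ioi.mem_nhds hx)).hasDerivAt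
  have hDd : ∀ x > (0 : ℝ), HasDerivAt (deriv f) (deriv (deriv f) x) x := by
    intro x hx
    exact ((hD2.differentiableOn (by norm_num)).differentiableAt
      (isOpen_Ioi.mem_nhds hx)).hasDerivAt
  -- ψ 1 = f
  have hψ1 : ψ 1 = f := by
    funext s
    rw [hψ]
    simp [Real.one_rpow]
  -- partial derivative in s: for t > 0, s > 0, deriv (ψ t) s = f'(s / t^{1/2})
  have hpartial : ∀ t > (0 : ℝ), ∀ s > (0 : ℝ),
      deriv (ψ t) s = deriv f (s / t ^ ((1 : ℝ) / 2)) := by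
    intro t ht s hs
    have htpos : (0 : ℝ) < t ^ ((1 : ℝ) / 2) := Real.rpow_pos_of_pos ht _
    have hzpos : (0 : ℝ) < s / t ^ ((1 : ℝ) / 2) := div_pos hs htpos
    have hinner : HasDerivAt (fun u : ℝ => u / t ^ ((1 : ℝ) / 2))
        (1 / t ^ ((1 : ℝ) / 2)) s := (hasDerivAt_id s).div_const _
    have hcomp := ((hfd _ hzpos).comp s hinner).const_mul (t ^ ((1 : ℝ) / 2))
    have : ψ t = fun u => t ^ ((1 : ℝ) / 2) * f (u / t ^ ((1 : ℝ) / 2)) := by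
      funext u; exact hψ t u
    simp only [Function.comp_def] at hcomp
    rw [this, hcomp.deriv]
    field_simp
  -- derivative in t of ψ t z at t = 1
  have hroot : HasDerivAt (fun t : ℝ => t ^ ((1 : ℝ) / 2)) (1 / 2) 1 := by
    have := Real.hasDerivAt_rpow_const (x := (1 : ℝ)) (p := 1 / 2) (Or.inl one_ne_zero)
    simpa using this
  have hv : HasDerivAt (fun t : ℝ => z / t ^ ((1 : ℝ) / 2)) (-(z / 2)) 1 := by
    have := (hasDerivAt_const (1 : ℝ) z).div hroot (by simp)
    simp only [Pi.div_def] at this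
    exact this.congr_deriv (by norm_num; ring)
  have hfz := hfd z hz
  have hcompfv : HasDerivAt (fun t : ℝ => f (z / t ^ ((1 : ℝ) / 2)))
      (deriv f z * -(z / 2)) 1 := by
    have hv1 : z / (1 : ℝ) ^ ((1 : ℝ) / 2) = z := by simp
    have hfz' : HasDerivAt f (deriv f (z / (1 : ℝ) ^ ((1 : ℝ) / 2)))
        (z / (1 : ℝ) ^ ((1 : ℝ) / 2)) := by rw [hv1]; exact hfz
    have := hfz'.comp 1 hv
    simpa [hv1, Function.comp_def] using this
  have hψt : deriv (fun t => ψ t z) 1 = (1 / 2) * f z - z / 2 * deriv f z := by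
    have heq : (fun t => ψ t z)
        = fun t => t ^ ((1 : ℝ) / 2) * f (z / t ^ ((1 : ℝ) / 2)) := by
      funext t; exact hψ t z
    rw [heq]
    have := hroot.mul hcompfv
    simp only [Pi.mul_def] at this
    rw [this.deriv]
    simp
    ring
  -- derivative in t of (deriv (ψ t) z) at t = 1
  have hmixed : deriv (fun t => deriv (ψ t) z) 1 = -(z / 2) * deriv (deriv f) z := by
    have hev : (fun t => deriv (ψ t) z)
        =ᶠ[nhds 1] fun t => deriv f (z / t ^ ((1 : ℝ) / 2)) := by
      filter_upwards [isOpen_Ioi.mem_nhds (show (0:ℝ) < 1 by norm_num)] with t ht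
      exact hpartial t ht z hz
    rw [hev.deriv_eq]
    have hDz := hDd z hz
    have hv1 : z / (1 : ℝ) ^ ((1 : ℝ) / 2) = z := by simp
    have hDz' : HasDerivAt (deriv f) (deriv (deriv f) (z / (1 : ℝ) ^ ((1 : ℝ) / 2)))
        (z / (1 : ℝ) ^ ((1 : ℝ) / 2)) := by rw [hv1]; exact hDz
    have := hDz'.comp 1 hv
    rw [(by simpa [hv1, Function.comp_def] using this : HasDerivAt (fun t : ℝ => deriv f (z / t ^ ((1:ℝ)/2)))
      (deriv (deriv f) z * -(z / 2)) 1).deriv]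
    ring
  -- specialize the PDE at l = 1
  have key := hpde 1 one_pos z hz
  rw [hψ1] at key
  have hσ1 : (fun t => (σhat 1 t) ^ (-(6 : ℝ) / 25) * deriv (deriv f) t)
      = fun t => (Sig t) ^ (-(6 : ℝ) / 25) * deriv (deriv f) t := by
    funext t
    rw [hσhat]
    simp [Real.one_rpow]
  rw [hσ1, hψt, hmixed] at key
  nlinarith [key]
end

section
/- Let i₀ > 0 and c > 0. Let f : [0,∞) → ℝ be C³ with f(0) = 0, let u = f′ satisfy 0 < u(z) < √(2 i₀) and f″(z) > 0 for all z > 0 (so u is strictly increasing), and set Σ(z) = 1 − u(z)²/(2 i₀) ∈ (0,1). Let J = u((0,∞)) and let τ : J → ℝ be C² such that τ(u(z)) = Σ(z)^{−6/25}·f″(z) for all z > 0. If f satisfies −(1/2)·f(z)·f″(z) = c · d/dz[ Σ(z)^{−6/25}·f″(z) ] for all z > 0, then for all z > 0: τ(u(z)) · τ″(u(z)) = −(1/(2c)) · u(z) · (1 − u(z)²/(2 i₀))^{−6/25}, where τ″ denotes the second derivative of τ with respect to the velocity variable u. -/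
open Set

/-- Dorodnitzyn's quasi-linear shear-stress equation. If the Blasius-type
profile `f` (with `f(0) = 0`, `u = f′` strictly increasing with values in `(0, √(2 i₀))`)
satisfies the ODE `−(1/2) f f″ = c d/dz[Σ^{−6/25} f″]`, then the transformed shear stress
`τ(u(z)) = Σ(z)^{−6/25} f″(z)`, regarded as a function of the velocity `u`, satisfies
`τ τ″ = −(1/(2c)) u (1 − u²/(2 i₀))^{−6/25}`. -/
theorem shear_stress_quasilinear_equation
    (i₀ c : ℝ) (hi₀ : 0 < i₀) (hc : 0 < c)
    (f : ℝ → ℝ) (hf : ContDiffOn ℝ 3 f (Ici 0)) (hf0 : f 0 = 0)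
    (hu_pos : ∀ z > (0 : ℝ), 0 < deriv f z)
    (hu_lt : ∀ z > (0 : ℝ), deriv f z < Real.sqrt (2 * i₀))
    (hf'' : ∀ z > (0 : ℝ), 0 < deriv (deriv f) z)
    (Sig : ℝ → ℝ)
    (hSig : ∀ z > (0 : ℝ), Sig z = 1 - (deriv f z) ^ 2 / (2 * i₀))
    (J : Set ℝ) (hJ : J = deriv f '' Ioi 0)
    (τ : ℝ → ℝ) (hτreg : ContDiffOn ℝ 2 τ J)
    (hτ : ∀ z > (0 : ℝ), τ (deriv f z) = (Sig z) ^ (-(6 : ℝ) / 25) * deriv (deriv f) z)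
    (hode : ∀ z > (0 : ℝ),
      -(1 / 2) * f z * deriv (deriv f) z
        = c * deriv (fun t => (Sig t) ^ (-(6 : ℝ) / 25) * deriv (deriv f) t) z) :
    ∀ z > (0 : ℝ),
      τ (deriv f z) * deriv (deriv τ) (deriv f z)
        = -(1 / (2 * c)) * deriv f z
            * (1 - (deriv f z) ^ 2 / (2 * i₀)) ^ (-(6 : ℝ) / 25) := by
  -- basic regularity on the open set Ioi 0
  have hfI : ContDiffOn ℝ 3 f (Ioi 0) := hf.mono Ioi_subset_Ici_self
  have hopen : IsOpen (Ioi (0:ℝ)) := isOpen_Ioi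
  have hu_cd : ContDiffOn ℝ 2 (deriv f) (Ioi 0) :=
    hfI.deriv_of_isOpen hopen (by norm_num)
  have hu_diffAt : ∀ z > (0:ℝ), HasDerivAt (deriv f) (deriv (deriv f) z) z := by
    intro z hz
    exact ((hu_cd.differentiableOn (by norm_num)).differentiableAt
      (hopen.mem_nhds hz)).hasDerivAt
  have hf_diffAt : ∀ z > (0:ℝ), HasDerivAt f (deriv f z) z := by
    intro z hz
    exact ((hfI.differentiableOn (by norm_num)).differentiableAt
      (hopen.mem_nhds hz)).hasDerivAt
  have hu_cont : ContinuousOn (deriv f) (Ioi 0) := hu_cd.continuousOn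
  have hu_mono : StrictMonoOn (deriv f) (Ioi 0) := by
    apply strictMonoOn_of_deriv_pos (convex_Ioi 0) hu_cont
    intro x hx
    rw [interior_Ioi] at hx
    exact hf'' x hx
  -- J is open
  have hJopen : IsOpen J := by
    rw [hJ, isOpen_iff_mem_nhds]
    rintro x ⟨z, hz, rfl⟩
    have hz' : (0:ℝ) < z := hz
    have ha : (0:ℝ) < z/2 := by linarith
    have hb : z < z + 1 := by linarith
    have hab : z/2 < z := by linarith
    have hcont : ContinuousOn (deriv f) (Icc (z/2) (z+1)) :=
      hu_cont.mono (fun t ht => lt_of_lt_of_le ha ht.1)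
    have hsub : Ioo (deriv f (z/2)) (deriv f (z+1)) ⊆ deriv f '' Ioi 0 := by
      refine subset_trans (intermediate_value_Ioo (by linarith) hcont) ?_
      exact image_mono (fun t ht => lt_trans ha ht.1)
    have hmem : deriv f z ∈ Ioo (deriv f (z/2)) (deriv f (z+1)) :=
      ⟨hu_mono ha hz' hab, hu_mono hz' (by linarith : (0:ℝ) < z+1) hb⟩
    exact mem_nhds_iff.mpr ⟨_, hsub, isOpen_Ioo, hmem⟩
  have hmemJ : ∀ z > (0:ℝ), deriv f z ∈ J := by
    intro z hz; rw [hJ]; exact ⟨z, hz, rfl⟩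
  have hτ_diffAt : ∀ x ∈ J, HasDerivAt τ (deriv τ x) x := by
    intro x hx
    exact ((hτreg.differentiableOn (by norm_num)).differentiableAt
      (hJopen.mem_nhds hx)).hasDerivAt
  have hτ'_cd : ContDiffOn ℝ 1 (deriv τ) J :=
    hτreg.deriv_of_isOpen hJopen (by norm_num)
  have hτ'_diffAt : ∀ x ∈ J, HasDerivAt (deriv τ) (deriv (deriv τ) x) x := by
    intro x hx
    exact ((hτ'_cd.differentiableOn (by norm_num)).differentiableAt
      (hJopen.mem_nhds hx)).hasDerivAt
  -- Step A: deriv τ (deriv f z) = -(1/(2c)) f z for z > 0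
  have stepA : ∀ z > (0:ℝ), deriv τ (deriv f z) = -(1/(2*c)) * f z := by
    intro z hz
    have hcomp : HasDerivAt (fun w => τ (deriv f w))
        (deriv τ (deriv f z) * deriv (deriv f) z) z :=
      (hτ_diffAt _ (hmemJ z hz)).comp z (hu_diffAt z hz)
    have heq : (fun w => τ (deriv f w)) =ᶠ[nhds z]
        (fun t => (Sig t) ^ (-(6:ℝ)/25) * deriv (deriv f) t) := by
      filter_upwards [hopen.mem_nhds hz] with t ht
      exact hτ t ht
    have hT : HasDerivAt (fun t => (Sig t) ^ (-(6:ℝ)/25) * deriv (deriv f) t)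
        (deriv τ (deriv f z) * deriv (deriv f) z) z :=
      hcomp.congr_of_eventuallyEq heq.symm
    have h1 := hode z hz
    rw [hT.deriv] at h1
    have hne : deriv (deriv f) z ≠ 0 := ne_of_gt (hf'' z hz)
    have hcne : c ≠ 0 := ne_of_gt hc
    have h2 : deriv τ (deriv f z) * deriv (deriv f) z
        = (-(1/(2*c)) * f z) * deriv (deriv f) z := by
      field_simp
      apply mul_right_cancel₀ hne
      linarith [h1]
    exact mul_right_cancel₀ hne h2
  -- Step B: deriv (deriv τ) (deriv f z) * f'' z = -(1/(2c)) * deriv f z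
  intro z hz
  have hB : deriv (deriv τ) (deriv f z) * deriv (deriv f) z
      = -(1/(2*c)) * deriv f z := by
    have hcomp : HasDerivAt (fun w => deriv τ (deriv f w))
        (deriv (deriv τ) (deriv f z) * deriv (deriv f) z) z :=
      (hτ'_diffAt _ (hmemJ z hz)).comp z (hu_diffAt z hz)
    have hrhs : HasDerivAt (fun w => -(1/(2*c)) * f w)
        (-(1/(2*c)) * deriv f z) z :=
      (hf_diffAt z hz).const_mul _
    have heq : (fun w => deriv τ (deriv f w)) =ᶠ[nhds z]
        (fun w => -(1/(2*c)) * f w) := by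
      filter_upwards [hopen.mem_nhds hz] with t ht
      exact stepA t ht
    have := (hrhs.congr_of_eventuallyEq heq).unique hcomp
    linarith [this]
  have hne : deriv (deriv f) z ≠ 0 := ne_of_gt (hf'' z hz)
  have hτz := hτ z hz
  rw [hτz, hSig z hz]
  have hB' : deriv (deriv τ) (deriv f z)
      = -(1/(2*c)) * deriv f z / deriv (deriv f) z := by
    field_simp at hB ⊢
    linarith [hB]
  rw [hB']
  field_simp
end
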